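/- arXiv:2404.12057 — 3 statements merged into one kernel-verified Lean document; each statement's English description precedes it below -/
import Mathlib

section
/- A nonempty subset A ⊆ X̂ is gated with respect to the majority-vote median μ if and only if A is P-convex. -/
open Set

namespace WallDuality

variable {S : Type*}

/-- A wall on `S`, recorded as the unordered pair of its two complementary halfspaces. -/
def IsWall (h : Set (Set S)) : Prop := ∃ A : Set S, h = {A, Aᶜ}

/-- A set with walls: every element of `P` is a wall on `S`. -/
def IsWallSystem (P : Set (Set (Set S))) : Prop := ∀ h ∈ P, IsWall h

variable (P : Set (Set (Set S)))

/-- An ultrafilter on `P`: a consistent choice of a halfspace of each wall of `P`. -/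
def IsUltra (x : ↥P → Set S) : Prop :=
  (∀ w : ↥P, x w ∈ w.1) ∧
    ∀ (w₁ w₂ : ↥P) (A B : Set S), A ∈ w₁.1 → B ∈ w₂.1 → A ⊆ B → x w₁ = A → x w₂ = B

/-- The set `X̂` of all ultrafilters on `P`. -/
def hatX : Set (↥P → Set S) := {x | IsUltra P x}

/-- The principal ultrafilter of a point `s`: each wall is oriented towards `s`. -/
def principalUF (s : S) : ↥P → Set S := fun w => ⋃₀ {A | A ∈ w.1 ∧ s ∈ A}

/-- The pseudodistance associated with a collection `C` of subsets of `P`: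
the supremum of the cardinalities of members of `C` all of whose walls separate
the two orientations. -/
noncomputable def wallDist (C : Set (Set ↥P)) (x y : ↥P → Set S) : ℕ∞ :=
  ⨆ c ∈ {c | c ∈ C ∧ ∀ w ∈ c, x w ≠ y w}, c.encard

/-- A dualisable system on `(S, P)`. -/
structure IsDualisable (C : Set (Set ↥P)) : Prop where
  singleton_mem : ∀ w : ↥P, ({w} : Set ↥P) ∈ C
  subset_mem : ∀ c ∈ C, ∀ c' ⊆ c, c' ∈ C
  bounded : ∀ s t : S, ∃ M : ℕ, ∀ c ∈ C,
    (∀ w ∈ c, principalUF P s w ≠ principalUF P t w) → c.encard ≤ (M : ℕ∞)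

/-- The dual space `X_C`: ultrafilters at finite distance from all principal ones. -/
def dualSpace (C : Set (Set ↥P)) : Set (↥P → Set S) :=
  {x | IsUltra P x ∧ ∀ s : S, wallDist P C x (principalUF P s) ≠ ⊤}

/-- The majority-vote median of three orientations. -/
def medianUF (x y z : ↥P → Set S) : ↥P → Set S :=
  fun w => x w ∩ y w ∪ x w ∩ z w ∪ y w ∩ z w

/-- A `P`-convex subset of `X̂`: an intersection of halfspaces. -/
def IsPConvex (C' : Set (↥P → Set S)) : Prop :=
  ∃ (Q : Set ↥P) (σ : ↥P → Set S), (∀ w ∈ Q, σ w ∈ w.1) ∧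
    C' = {v | IsUltra P v ∧ ∀ w ∈ Q, v w = σ w}

open scoped Classical in
/-- The gate of `z` to a set `C'` of orientations: reverse the orientation of exactly
those walls that separate `z` from `C'`. -/
noncomputable def gateUF (C' : Set (↥P → Set S)) (z : ↥P → Set S) : ↥P → Set S :=
  fun w => if ∃ v ∈ C', v w = z w then z w else (z w)ᶜ

/-- `A` is gated in `Y` (with respect to the majority-vote median). -/
def IsGatedIn (Y A : Set (↥P → Set S)) : Prop :=
  ∀ x ∈ Y, ∃! g, g ∈ A ∧ ∀ a ∈ A, medianUF P a g x = g

/-- `σ` is a nested choice of halfspaces witnessing that `c` is a chain. -/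
def IsChainOrder (σ : ↥P → Set S) (c : Set ↥P) : Prop :=
  (∀ w ∈ c, σ w ∈ w.1) ∧ ∀ w₁ ∈ c, ∀ w₂ ∈ c, σ w₁ ⊆ σ w₂ ∨ σ w₂ ⊆ σ w₁

/-- A chain of walls. -/
def IsWallChain (c : Set ↥P) : Prop := ∃ σ, IsChainOrder P σ c

/-- A system of chains: a dualisable system all of whose members are chains. -/
def IsChainSystem (C : Set (Set ↥P)) : Prop :=
  IsDualisable P C ∧ ∀ c ∈ C, IsWallChain P c

/-- `C` is `m`-gluable: two members of `C`, one entirely preceding the other and with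
union a chain, can be glued after removing at most `m` consecutive walls taken from
the last `m` walls of the first and the first `m` walls of the second. -/
def IsGluable (C : Set (Set ↥P)) (m : ℕ) : Prop :=
  ∀ c₁ ∈ C, ∀ c₂ ∈ C, ∀ σ : ↥P → Set S,
    IsChainOrder P σ (c₁ ∪ c₂) → Disjoint c₁ c₂ →
    (∀ w₁ ∈ c₁, ∀ w₂ ∈ c₂, σ w₁ ⊆ σ w₂) →
    ∃ b ⊆ c₁ ∪ c₂,
      b.encard ≤ (m : ℕ∞) ∧
      (∀ w ∈ b ∩ c₁, {w' | w' ∈ c₁ ∧ σ w ⊂ σ w'}.encard < (m : ℕ∞)) ∧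
      (∀ w ∈ b ∩ c₂, {w' | w' ∈ c₂ ∧ σ w' ⊂ σ w}.encard < (m : ℕ∞)) ∧
      (∀ w₁ ∈ b, ∀ w₂ ∈ b, ∀ w ∈ c₁ ∪ c₂, σ w₁ ⊆ σ w → σ w ⊆ σ w₂ → w ∈ b) ∧
      (c₁ ∪ c₂) \ b ∈ C

/-- The ball of radius `r` about `x` in `X_C`. -/
def ballX (C : Set (Set ↥P)) (x : ↥P → Set S) (r : ℕ∞) : Set (↥P → Set S) :=
  {z | z ∈ dualSpace P C ∧ wallDist P C x z ≤ r}

/-- The normal wall path: the gate of `y` to the ball of radius `r` about `x`. -/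
noncomputable def nwp (C : Set (Set ↥P)) (x y : ↥P → Set S) (r : ℕ) : ↥P → Set S :=
  gateUF P (ballX P C x (r : ℕ∞)) y

/-- Two walls cross: all four quarterspaces are nonempty. -/
def Crosses (w₁ w₂ : ↥P) : Prop := ∀ A ∈ w₁.1, ∀ B ∈ w₂.1, (A ∩ B).Nonempty

/-- `C` is `L`-separated. -/
def IsSeparated (C : Set (Set ↥P)) (L : ℕ) : Prop :=
  ∀ w₁ w₂ : ↥P, w₁ ≠ w₂ → ({w₁, w₂} : Set ↥P) ∈ C →
    ∀ c ∈ C, (∀ w ∈ c, Crosses P w w₁ ∧ Crosses P w w₂) → c.encard ≤ (L : ℕ∞)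

end WallDuality

namespace WallDuality

/-!
The gate of `x` in `A` is forced wall by wall: it must orient a wall as `x` does whenever some
point of `A` does, and otherwise as all of `A` does. This orientation is again an ultrafilter, and
it lies in `A` exactly when `A` is cut out by the walls on which `A` is constant. Uniqueness of
gates is just the symmetry of the median in its first two arguments.
-/

section

variable {S : Type*}

theorem IsWall.compl_mem {h : Set (Set S)} (hw : IsWall h) {u : Set S} (hu : u ∈ h) :
    uᶜ ∈ h := by
  obtain ⟨C, rfl⟩ := hw
  rcases hu with rfl | rfl <;> simp

theorem IsWall.eq_compl_of_ne {h : Set (Set S)} (hw : IsWall h) {u v : Set S}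
    (hu : u ∈ h) (hv : v ∈ h) (hne : u ≠ v) : u = vᶜ := by
  obtain ⟨C, rfl⟩ := hw
  rcases hu with rfl | rfl <;> rcases hv with rfl | rfl <;> simp_all

variable (P : Set (Set (Set S)))

section Median

variable {x y z : ↥P → Set S} {w : ↥P}

theorem medianUF_comm (x y z : ↥P → Set S) : medianUF P x y z = medianUF P y x z := by
  funext w
  ext s
  simp only [medianUF, mem_union, mem_inter_iff]
  tauto

theorem medianUF_apply_of_eq_right (h : y w = z w) : medianUF P x y z w = y w := by
  ext s
  simp only [medianUF, mem_union, mem_inter_iff, h]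
  tauto

theorem medianUF_apply_of_eq_left (h : x w = y w) : medianUF P x y z w = y w := by
  ext s
  simp only [medianUF, mem_union, mem_inter_iff, h]
  tauto

theorem medianUF_apply_of_eq_compl (h : z w = (y w)ᶜ) : medianUF P x y z w = x w := by
  ext s
  simp only [medianUF, mem_union, mem_inter_iff, h, mem_compl_iff]
  tauto

end Median

def IsGate (A : Set (↥P → Set S)) (x g : ↥P → Set S) : Prop :=
  g ∈ A ∧ ∀ a ∈ A, medianUF P a g x = g

variable {P} {A : Set (↥P → Set S)} {x g : ↥P → Set S}

theorem IsGate.unique {g' : ↥P → Set S} (hg : IsGate P A x g) (hg' : IsGate P A x g') :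
    g = g' :=
  calc g = medianUF P g' g x := (hg.2 g' hg'.1).symm
    _ = medianUF P g g' x := medianUF_comm P _ _ _
    _ = g' := hg'.2 g hg.1

theorem IsGate.apply_eq_of_ne (hP : IsWallSystem P) (hA' : A ⊆ hatX P) (hx : x ∈ hatX P)
    (hg : IsGate P A x g) {w : ↥P} (hne : g w ≠ x w) {a : ↥P → Set S} (ha : a ∈ A) :
    a w = g w := by
  have hxg : x w = (g w)ᶜ := (hP _ w.2).eq_compl_of_ne (hx.1 w) ((hA' hg.1).1 w) hne.symm
  rw [← medianUF_apply_of_eq_compl P (x := a) hxg, hg.2 a ha]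

/-- The walls on which all of `A` agree, oriented as `A` orients them, cut out `A`. -/
theorem isPConvex_of_isGatedIn (hP : IsWallSystem P) (hA : A.Nonempty) (hA' : A ⊆ hatX P)
    (hgated : IsGatedIn P (hatX P) A) : IsPConvex P A := by
  obtain ⟨a₀, ha₀⟩ := hA
  refine ⟨{w | ∀ a ∈ A, a w = a₀ w}, a₀, fun w _ => (hA' ha₀).1 w, ?_⟩
  ext x
  refine ⟨fun hx => ⟨hA' hx, fun w hw => hw x hx⟩, fun ⟨hx, hxQ⟩ => ?_⟩
  obtain ⟨g, hg, -⟩ := hgated x hx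
  suffices g = x from this ▸ hg.1
  funext w
  by_contra hne
  have hAw : ∀ a ∈ A, a w = g w := fun a ha => IsGate.apply_eq_of_ne hP hA' hx hg hne ha
  have hwQ : w ∈ {w | ∀ a ∈ A, a w = a₀ w} := fun a ha => (hAw a ha).trans (hAw a₀ ha₀).symm
  exact hne ((hAw a₀ ha₀).symm.trans (hxQ w hwQ).symm)

section GateUF

variable (hP : IsWallSystem P) {w : ↥P}
include hP

theorem gateUF_apply_mem (hx : x w ∈ w.1) : gateUF P A x w ∈ w.1 := by
  unfold gateUF
  split_ifs
  exacts [hx, (hP _ w.2).compl_mem hx]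

theorem gateUF_apply_eq_iff (hA : A.Nonempty) (hA' : A ⊆ hatX P) (hx : x w ∈ w.1)
    {B : Set S} :
    gateUF P A x w = B ↔ (∃ a ∈ A, a w = B) ∧ (x w ≠ B → ∀ a ∈ A, a w = B) := by
  unfold gateUF
  split_ifs with h
  · obtain ⟨v, hv, hvx⟩ := h
    refine ⟨fun hxB => ⟨⟨v, hv, hvx.trans hxB⟩, fun hne => absurd hxB hne⟩, ?_⟩
    rintro ⟨-, hall⟩
    by_contra hne
    exact hne (hvx.symm.trans (hall hne v hv))
  · push Not at h
    have hcompl : ∀ a ∈ A, a w = (x w)ᶜ := fun a ha =>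
      (hP _ w.2).eq_compl_of_ne ((hA' ha).1 w) hx (h a ha)
    obtain ⟨a₀, ha₀⟩ := hA
    refine ⟨fun hB => ⟨⟨a₀, ha₀, hB ▸ hcompl a₀ ha₀⟩, fun _ a ha => hB ▸ hcompl a ha⟩, ?_⟩
    rintro ⟨⟨a, ha, haB⟩, -⟩
    rw [← haB, hcompl a ha]

theorem gateUF_mem_hatX (hA : A.Nonempty) (hA' : A ⊆ hatX P) (hx : x ∈ hatX P) :
    gateUF P A x ∈ hatX P := by
  refine ⟨fun w => gateUF_apply_mem hP (hx.1 w), fun w₁ w₂ B₁ B₂ hB₁ hB₂ hsub hg₁ => ?_⟩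
  rw [gateUF_apply_eq_iff hP hA hA' (hx.1 w₁)] at hg₁
  rw [gateUF_apply_eq_iff hP hA hA' (hx.1 w₂)]
  obtain ⟨⟨a, ha, haB⟩, hall⟩ := hg₁
  refine ⟨⟨a, ha, (hA' ha).2 w₁ w₂ B₁ B₂ hB₁ hB₂ hsub haB⟩, fun hx₂ b hb => ?_⟩
  have hx₁ : x w₁ ≠ B₁ := fun h => hx₂ (hx.2 w₁ w₂ B₁ B₂ hB₁ hB₂ hsub h)
  exact (hA' hb).2 w₁ w₂ B₁ B₂ hB₁ hB₂ hsub (hall hx₁ b hb)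

theorem medianUF_gateUF (hA : A.Nonempty) (hA' : A ⊆ hatX P) (hx : x ∈ hatX P)
    {a : ↥P → Set S} (ha : a ∈ A) : medianUF P a (gateUF P A x) x = gateUF P A x := by
  funext w
  obtain ⟨-, hall⟩ :=
    (gateUF_apply_eq_iff hP hA hA' (hx.1 w)).1 (rfl : gateUF P A x w = _)
  by_cases hxg : x w = gateUF P A x w
  · exact medianUF_apply_of_eq_right P hxg.symm
  · exact medianUF_apply_of_eq_left P (hall hxg a ha)

theorem gateUF_mem_of_isPConvex (hA : A.Nonempty) (hA' : A ⊆ hatX P) (hconv : IsPConvex P A)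
    (hx : x ∈ hatX P) : gateUF P A x ∈ A := by
  obtain ⟨Q, σ, -, rfl⟩ := hconv
  refine ⟨gateUF_mem_hatX hP hA hA' hx, fun w hw => ?_⟩
  rw [gateUF_apply_eq_iff hP hA hA' (hx.1 w)]
  obtain ⟨a₀, ha₀⟩ := hA
  exact ⟨⟨a₀, ha₀, ha₀.2 w hw⟩, fun _ a ha => ha.2 w hw⟩

theorem isGatedIn_of_isPConvex (hA : A.Nonempty) (hA' : A ⊆ hatX P) (hconv : IsPConvex P A) :
    IsGatedIn P (hatX P) A := by
  intro x hx
  have hgate : IsGate P A x (gateUF P A x) :=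
    ⟨gateUF_mem_of_isPConvex hP hA hA' hconv hx, fun a ha => medianUF_gateUF hP hA hA' hx ha⟩
  exact ⟨_, hgate, fun g hg => IsGate.unique hg hgate⟩

end GateUF

end

/-- A nonempty subset of `X̂` is gated with respect to the majority-vote median
if and only if it is `P`-convex. -/
theorem gated_iff_PConvex
    {S : Type*} (P : Set (Set (Set S))) (hP : IsWallSystem P)
    (A : Set (↥P → Set S)) (hA : A.Nonempty) (hA' : A ⊆ hatX P) :
    IsGatedIn P (hatX P) A ↔ IsPConvex P A :=
  ⟨isPConvex_of_isGatedIn hP hA hA', isGatedIn_of_isPConvex hP hA hA'⟩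

end WallDuality
end

section
/- Gates land in X_C and are closest points: let C be a dualisable system on a set with walls (S,P), let Ĉ ⊆ X̂ be a nonempty P-convex set such that C₀ := X_C ∩ Ĉ is nonempty, and let x ∈ X_C. Let g(x) denote the gate of x to Ĉ, i.e. the ultrafilter obtained from x by reversing x(h) exactly for the walls h separating x from Ĉ. Then: g(x) ∈ C₀; every wall separating x from g(x) separates x from every point of Ĉ; and dist_C(x,c) ≥ dist_C(x,g(x)) for every c ∈ C₀. -/
open Set

/-!
On a wall `w` that some point of `C'` orients like `x`, the gate agrees with `x`; on any other
wall every point of `C'` orients `w` away from `x`, so the gate agrees with all of `C'`. Hence on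
any two walls the gate agrees with a single ultrafilter (`x` or a point of `C'`), which makes the
gate an ultrafilter, and it satisfies the halfspace constraints cutting out `C'`. A wall
separating `x` from the gate separates `x` from all of `C'`, so the gate is a closest point; and a
wall separating the gate from `φ_s` separates `φ_s` from `x` or from a fixed point of `X_C ∩ C'`,
so the gate stays at finite distance from `φ_s`.
-/

namespace WallDuality

section Walls

variable {S : Type*} {P : Set (Set (Set S))}

lemma IsWallSystem.eq_compl_of_ne (hP : IsWallSystem P) {w : ↥P} {A B : Set S}
    (hA : A ∈ w.1) (hB : B ∈ w.1) (hne : B ≠ A) : B = Aᶜ := by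
  obtain ⟨D, hD⟩ := hP w.1 w.2
  rw [hD] at hA hB
  rcases hA with rfl | rfl <;> rcases hB with rfl | rfl <;>
    first | exact absurd rfl hne | rfl | rw [compl_compl]

lemma IsPConvex.isUltra_of_mem {C' : Set (↥P → Set S)} (hconv : IsPConvex P C')
    {v : ↥P → Set S} (hv : v ∈ C') : IsUltra P v := by
  obtain ⟨Q, σ, -, rfl⟩ := hconv
  exact hv.1

end Walls

section Distance

variable {S : Type*} {P : Set (Set (Set S))} {C : Set (Set ↥P)}

lemma wallDist_mono {x y x' y' : ↥P → Set S} (h : ∀ w, x w ≠ y w → x' w ≠ y' w) :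
    wallDist P C x y ≤ wallDist P C x' y' :=
  iSup₂_le fun c hc => le_iSup₂_of_le c ⟨hc.1, fun w hw => h w (hc.2 w hw)⟩ le_rfl

lemma wallDist_le_add (hC : ∀ c ∈ C, ∀ c' ⊆ c, c' ∈ C) {x y x₁ y₁ x₂ y₂ : ↥P → Set S}
    (h : ∀ w, x w ≠ y w → x₁ w ≠ y₁ w ∨ x₂ w ≠ y₂ w) :
    wallDist P C x y ≤ wallDist P C x₁ y₁ + wallDist P C x₂ y₂ := by
  refine iSup₂_le fun c hc => ?_
  let c₁ : Set ↥P := {w ∈ c | x₁ w ≠ y₁ w}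
  have h₁ : c₁.encard ≤ wallDist P C x₁ y₁ :=
    le_iSup₂_of_le c₁ ⟨hC c hc.1 c₁ (sep_subset _ _), fun w hw => hw.2⟩ le_rfl
  have h₂ : (c \ c₁).encard ≤ wallDist P C x₂ y₂ := by
    refine le_iSup₂_of_le (c \ c₁) ⟨hC c hc.1 _ sdiff_subset, fun w hw => ?_⟩ le_rfl
    exact (h w (hc.2 w hw.1)).resolve_left fun hne => hw.2 ⟨hw.1, hne⟩
  calc c.encard = (c₁ ∪ c \ c₁).encard := by rw [union_sdiff_cancel (sep_subset _ _)]
    _ ≤ c₁.encard + (c \ c₁).encard := encard_union_le _ _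
    _ ≤ _ := add_le_add h₁ h₂

end Distance

section Gate

variable {S : Type*} {P : Set (Set (Set S))} {C' : Set (↥P → Set S)} {z v : ↥P → Set S}
  {w : ↥P}

lemma gateUF_apply_of_mem (hv : v ∈ C') (h : v w = z w) : gateUF P C' z w = z w := by
  classical
  simp only [gateUF, if_pos (⟨v, hv, h⟩ : ∃ v ∈ C', v w = z w)]

lemma ne_of_gateUF_apply_ne (h : gateUF P C' z w ≠ z w) (hv : v ∈ C') : v w ≠ z w :=
  fun he => h (gateUF_apply_of_mem hv he)

lemma wallDist_gateUF_le {C : Set (Set ↥P)} (hv : v ∈ C') :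
    wallDist P C z (gateUF P C' z) ≤ wallDist P C z v :=
  wallDist_mono fun _ hne he => ne_of_gateUF_apply_ne (Ne.symm hne) hv he.symm

lemma apply_eq_gateUF_of_not_exists (hP : IsWallSystem P) (hz : z w ∈ w.1) (hvw : v w ∈ w.1)
    (h : ¬∃ u ∈ C', u w = z w) (hv : v ∈ C') : v w = gateUF P C' z w := by
  classical
  simp only [gateUF, if_neg h]
  exact hP.eq_compl_of_ne hz hvw fun he => h ⟨v, hv, he⟩

lemma apply_eq_gateUF_of_gateUF_apply_ne (hP : IsWallSystem P) (hz : z w ∈ w.1)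
    (hvw : v w ∈ w.1) (h : gateUF P C' z w ≠ z w) (hv : v ∈ C') : v w = gateUF P C' z w :=
  apply_eq_gateUF_of_not_exists hP hz hvw (fun ⟨_, hu, he⟩ => ne_of_gateUF_apply_ne h hu he) hv

variable (hP : IsWallSystem P) (hz : IsUltra P z) (hC' : ∀ u ∈ C', IsUltra P u)
include hP hz hC'

lemma exists_mem_apply_eq_gateUF (hv : v ∈ C') (w : ↥P) : ∃ u ∈ C', u w = gateUF P C' z w := by
  rcases em (∃ u ∈ C', u w = z w) with ⟨u, hu, he⟩ | h
  · exact ⟨u, hu, he.trans (gateUF_apply_of_mem hu he).symm⟩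
  · exact ⟨v, hv, apply_eq_gateUF_of_not_exists hP (hz.1 w) ((hC' v hv).1 w) h hv⟩

lemma exists_isUltra_eq_gateUF_pair (hv : v ∈ C') (w₁ w₂ : ↥P) :
    ∃ u, IsUltra P u ∧ u w₁ = gateUF P C' z w₁ ∧ u w₂ = gateUF P C' z w₂ := by
  rcases em (∃ u ∈ C', u w₂ = z w₂) with ⟨u₂, hu₂, he₂⟩ | h₂
  · have hg₂ := gateUF_apply_of_mem hu₂ he₂
    rcases em (∃ u ∈ C', u w₁ = z w₁) with ⟨u₁, hu₁, he₁⟩ | h₁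
    · exact ⟨z, hz, (gateUF_apply_of_mem hu₁ he₁).symm, hg₂.symm⟩
    · exact ⟨u₂, hC' u₂ hu₂,
        apply_eq_gateUF_of_not_exists hP (hz.1 w₁) ((hC' u₂ hu₂).1 w₁) h₁ hu₂, he₂.trans hg₂.symm⟩
  · obtain ⟨u, hu, he₁⟩ := exists_mem_apply_eq_gateUF hP hz hC' hv w₁
    exact ⟨u, hC' u hu, he₁,
      apply_eq_gateUF_of_not_exists hP (hz.1 w₂) ((hC' u hu).1 w₂) h₂ hu⟩

lemma isUltra_gateUF (hv : v ∈ C') : IsUltra P (gateUF P C' z) := by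
  refine ⟨fun w => ?_, fun w₁ w₂ A B hA hB hAB hgA => ?_⟩
  · obtain ⟨u, hu, he, -⟩ := exists_isUltra_eq_gateUF_pair hP hz hC' hv w w
    exact he ▸ hu.1 w
  · obtain ⟨u, hu, he₁, he₂⟩ := exists_isUltra_eq_gateUF_pair hP hz hC' hv w₁ w₂
    exact he₂ ▸ hu.2 w₁ w₂ A B hA hB hAB (he₁.trans hgA)

end Gate

section GateMembership

variable {S : Type*} {P : Set (Set (Set S))} {C' : Set (↥P → Set S)} {x v : ↥P → Set S}

lemma gateUF_mem_of_isPConvex_s5 (hP : IsWallSystem P) (hconv : IsPConvex P C')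
    (hx : IsUltra P x) (hv : v ∈ C') : gateUF P C' x ∈ C' := by
  have hC' : ∀ u ∈ C', IsUltra P u := fun _ => hconv.isUltra_of_mem
  have hg := isUltra_gateUF hP hx hC' hv
  obtain ⟨Q, σ, -, rfl⟩ := hconv
  refine ⟨hg, fun w hw => ?_⟩
  obtain ⟨u, hu, he⟩ := exists_mem_apply_eq_gateUF hP hx hC' hv w
  exact he ▸ hu.2 w hw

lemma gateUF_mem_dualSpace {C : Set (Set ↥P)} (hP : IsWallSystem P)
    (hC : ∀ c ∈ C, ∀ c' ⊆ c, c' ∈ C) (hC' : ∀ u ∈ C', IsUltra P u)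
    (hx : x ∈ dualSpace P C) (hv : v ∈ dualSpace P C ∩ C') : gateUF P C' x ∈ dualSpace P C := by
  refine ⟨isUltra_gateUF hP hx.1 hC' hv.2, fun s => ?_⟩
  have hsplit : wallDist P C (gateUF P C' x) (principalUF P s) ≤
      wallDist P C x (principalUF P s) + wallDist P C v (principalUF P s) := by
    refine wallDist_le_add hC fun w hw => ?_
    by_cases hg : gateUF P C' x w = x w
    · exact Or.inl (hg ▸ hw)
    · exact Or.inr (apply_eq_gateUF_of_gateUF_apply_ne hP (hx.1.1 w)
        ((hC' v hv.2).1 w) hg hv.2 ▸ hw)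
  exact ne_top_of_le_ne_top (WithTop.add_ne_top.2 ⟨hx.2 s, hv.1.2 s⟩) hsplit

end GateMembership

/-- Gates to `P`-convex sets meeting `X_C` stay in `X_C`, the walls separating a
point from its gate separate it from the whole convex set, and the gate is a
closest point (Lemmas 3.10 and 3.11). -/
theorem gate_mem_dual_and_closest_point
    {S : Type*} (P : Set (Set (Set S))) (C : Set (Set ↥P))
    (hP : IsWallSystem P) (hC : IsDualisable P C)
    (C' : Set (↥P → Set S)) (hconv : IsPConvex P C')
    (hne : (dualSpace P C ∩ C').Nonempty)
    (x : ↥P → Set S) (hx : x ∈ dualSpace P C) :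
    gateUF P C' x ∈ dualSpace P C ∩ C' ∧
    (∀ w : ↥P, gateUF P C' x w ≠ x w → ∀ v ∈ C', v w ≠ x w) ∧
    (∀ c ∈ dualSpace P C ∩ C', wallDist P C x (gateUF P C' x) ≤ wallDist P C x c) := by
  obtain ⟨v, hv⟩ := hne
  have hC' : ∀ u ∈ C', IsUltra P u := fun _ => hconv.isUltra_of_mem
  exact ⟨⟨gateUF_mem_dualSpace hP hC.subset_mem hC' hx hv,
      gateUF_mem_of_isPConvex_s5 hP hconv hx.1 hv.2⟩,
    fun _ hg _ hu => ne_of_gateUF_apply_ne hg hu,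
    fun _ hc => wallDist_gateUF_le hc.2⟩

end WallDuality
end

section
/- Normal wall paths fellow-travel: let C be an m-gluable system of chains on a set with walls (S,P). For all x₁,y₁,x₂,y₂ ∈ X_C and every r ∈ ℕ, dist_C(σ_{x₁y₁}(r), σ_{x₂y₂}(r)) ≤ max{dist_C(x₁,x₂), dist_C(y₁,y₂)} + 3m, where σ_{xy}(r) denotes the gate of y to the ball B(x,r) (so σ_{xy}(r) = y whenever r ≥ dist_C(x,y)). -/
open Set

namespace WallDuality

open scoped Classical

variable {S : Type*} {P : Set (Set (Set S))} {C : Set (Set ↥P)}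

lemma wall_pair (hP : IsWallSystem P) (w : ↥P) {A : Set S} (hA : A ∈ w.1) :
    w.1 = {A, Aᶜ} := by
  obtain ⟨B, hB⟩ := hP w.1 w.2
  rw [hB] at hA ⊢
  rcases hA with rfl | hA
  · rfl
  · rw [Set.mem_singleton_iff] at hA
    subst hA
    rw [compl_compl]
    exact Set.pair_comm _ _

lemma compl_mem_wall (hP : IsWallSystem P) (w : ↥P) {A : Set S} (hA : A ∈ w.1) : Aᶜ ∈ w.1 := by
  rw [wall_pair hP w hA]; right; rfl

lemma eq_or_compl (hP : IsWallSystem P) (w : ↥P) {A B : Set S} (hA : A ∈ w.1) (hB : B ∈ w.1) :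
    B = A ∨ B = Aᶜ := by
  rw [wall_pair hP w hA] at hB; exact hB

lemma wall_eq_of_mem (hP : IsWallSystem P) {w w' : ↥P} {A : Set S} (hA : A ∈ w.1)
    (hA' : A ∈ w'.1) : w = w' :=
  Subtype.ext (by rw [show w.1 = {A, Aᶜ} from wall_pair hP w hA, wall_pair hP w' hA'])

lemma compl_ne' (hS : Nonempty S) (A : Set S) : A ≠ Aᶜ := by
  obtain ⟨s⟩ := hS
  intro h
  by_cases hs : s ∈ A
  · exact (h ▸ hs) hs
  · exact hs (h.symm ▸ (Set.mem_compl hs : s ∈ Aᶜ))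

lemma ultra_mono {x : ↥P → Set S} (hx : IsUltra P x) {w w' : ↥P} {A B : Set S}
    (hA : A ∈ w.1) (hB : B ∈ w'.1) (hAB : A ⊆ B) (hxw : x w = A) : x w' = B :=
  hx.2 w w' A B hA hB hAB hxw

lemma le_wallDist {x y : ↥P → Set S} {c : Set ↥P} (hc : c ∈ C) (hsep : ∀ w ∈ c, x w ≠ y w) :
    c.encard ≤ wallDist P C x y :=
  le_iSup₂ (f := fun c (_ : c ∈ {c | c ∈ C ∧ ∀ w ∈ c, x w ≠ y w}) => c.encard) c ⟨hc, hsep⟩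

lemma wallDist_le {x y : ↥P → Set S} {a : ℕ∞}
    (h : ∀ c ∈ C, (∀ w ∈ c, x w ≠ y w) → c.encard ≤ a) : wallDist P C x y ≤ a :=
  iSup₂_le fun c hc => h c hc.1 hc.2

lemma wallDist_symm (x y : ↥P → Set S) : wallDist P C x y = wallDist P C y x :=
  le_antisymm
    (wallDist_le fun _ hc hsep => le_wallDist hc fun w hw => (hsep w hw).symm)
    (wallDist_le fun _ hc hsep => le_wallDist hc fun w hw => (hsep w hw).symm)

lemma wallDist_self_le (x : ↥P → Set S) {a : ℕ∞} : wallDist P C x x ≤ a := by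
  refine wallDist_le fun c _ hsep => ?_
  have : c = ∅ := Set.eq_empty_iff_forall_notMem.2 fun w hw => hsep w hw rfl
  simp [this]

lemma wallDist_triangle (hD : IsDualisable P C) (x y z : ↥P → Set S) :
    wallDist P C x z ≤ wallDist P C x y + wallDist P C y z := by
  refine wallDist_le fun c hc hsep => ?_
  have hcover : c ⊆ (c ∩ {w | x w ≠ y w}) ∪ (c ∩ {w | y w ≠ z w}) := by
    intro w hw
    rcases eq_or_ne (x w) (y w) with h | h
    · exact Or.inr ⟨hw, fun h' => hsep w hw (h.trans h')⟩
    · exact Or.inl ⟨hw, h⟩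
  calc c.encard ≤ ((c ∩ {w | x w ≠ y w}) ∪ (c ∩ {w | y w ≠ z w})).encard :=
        Set.encard_mono hcover
    _ ≤ (c ∩ {w | x w ≠ y w}).encard + (c ∩ {w | y w ≠ z w}).encard := Set.encard_union_le _ _
    _ ≤ wallDist P C x y + wallDist P C y z := by
        gcongr
        · exact le_wallDist (hD.subset_mem c hc _ Set.inter_subset_left) fun w hw => hw.2
        · exact le_wallDist (hD.subset_mem c hc _ Set.inter_subset_left) fun w hw => hw.2

lemma self_mem_ball (hx : x ∈ dualSpace P C) (r : ℕ∞) : x ∈ ballX P C x r :=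
  ⟨hx, le_trans (wallDist_self_le x) le_rfl⟩

lemma ball_ultra {x v : ↥P → Set S} {r : ℕ∞} (hv : v ∈ ballX P C x r) : IsUltra P v :=
  hv.1.1

lemma mem_ball_of_dist (hD : IsDualisable P C) {x z : ↥P → Set S} {r : ℕ}
    (hx : x ∈ dualSpace P C) (hz : IsUltra P z) (h : wallDist P C x z ≤ (r : ℕ∞)) :
    z ∈ ballX P C x (r : ℕ∞) := by
  refine ⟨⟨hz, fun s => ?_⟩, h⟩
  have h1 : wallDist P C z (principalUF P s) ≤
      wallDist P C z x + wallDist P C x (principalUF P s) := wallDist_triangle hD _ _ _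
  have h2 : wallDist P C z x ≤ (r : ℕ∞) := (wallDist_symm x z) ▸ h
  intro htop
  rw [htop] at h1
  have : wallDist P C z x + wallDist P C x (principalUF P s) ≠ ⊤ :=
    WithTop.add_ne_top.2 ⟨ne_top_of_le_ne_top (WithTop.coe_ne_top) h2, hx.2 s⟩
  exact this (top_le_iff.1 h1)

lemma exists_big_chain (hD : IsDualisable P C) {x z : ↥P → Set S} {r : ℕ}
    (h : ¬ wallDist P C x z ≤ (r : ℕ∞)) :
    ∃ e ∈ C, e.Finite ∧ e.encard = (r : ℕ∞) + 1 ∧ ∀ w ∈ e, x w ≠ z w := by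
  rw [not_le] at h
  rw [wallDist, lt_iSup_iff] at h
  obtain ⟨c, hc⟩ := h
  rw [lt_iSup_iff] at hc
  obtain ⟨⟨hcC, hcsep⟩, hcard⟩ := hc
  have hle : (r : ℕ∞) + 1 ≤ c.encard := Order.add_one_le_of_lt hcard
  obtain ⟨e, hec, hecard⟩ := Set.exists_subset_encard_eq hle
  refine ⟨e, hD.subset_mem c hcC e hec, ?_, hecard, fun w hw => hcsep w (hec hw)⟩
  have : e.encard = ((r + 1 : ℕ) : ℕ∞) := by rw [hecard]; push_cast; ring
  exact Set.finite_of_encard_eq_coe this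

end WallDuality
namespace WallDuality

open scoped Classical

variable {S : Type*} {P : Set (Set (Set S))} {C : Set (Set ↥P)}

lemma gate_spec (B' : Set (↥P → Set S)) (z : ↥P → Set S) (w : ↥P) :
    ((∃ v ∈ B', v w = z w) ∧ gateUF P B' z w = z w) ∨
      ((∀ v ∈ B', v w ≠ z w) ∧ gateUF P B' z w = (z w)ᶜ) := by
  unfold gateUF
  split_ifs with h
  · exact Or.inl ⟨h, rfl⟩
  · push_neg at h
    exact Or.inr ⟨h, rfl⟩

lemma gate_mem_wall (hP : IsWallSystem P) {B' : Set (↥P → Set S)} {z : ↥P → Set S}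
    (hz : IsUltra P z) (w : ↥P) : gateUF P B' z w ∈ w.1 := by
  rcases gate_spec B' z w with ⟨_, h⟩ | ⟨_, h⟩
  · rw [h]; exact hz.1 w
  · rw [h]; exact compl_mem_wall hP w (hz.1 w)

/-- On a chain all of whose walls separate two ultrafilters, the halfspaces of either
ultrafilter are totally ordered. -/
lemma aligned (hP : IsWallSystem P) (hS : Nonempty S) (hC : IsChainSystem P C)
    {e : Set ↥P} {u u' : ↥P → Set S} (he : e ∈ C) (hu : IsUltra P u) (hu' : IsUltra P u')
    (hsep : ∀ w ∈ e, u w ≠ u' w) :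
    ∀ w ∈ e, ∀ w' ∈ e, u w ⊆ u w' ∨ u w' ⊆ u w := by
  obtain ⟨σe, hσmem, hσcomp⟩ := hC.2 e he
  have key : ∀ w ∈ e, ∀ w' ∈ e, σe w ⊆ σe w' → (u w ⊆ u w' ∨ u w' ⊆ u w) := by
    intro w hw w' hw' hss
    rcases eq_or_compl hP w (hσmem w hw) (hu.1 w) with h1 | h1
    · have : u w' = σe w' := ultra_mono hu (hσmem w hw) (hσmem w' hw') hss h1
      rw [h1, this]; exact Or.inl hss
    · rcases eq_or_compl hP w' (hσmem w' hw') (hu.1 w') with h2 | h2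
      · exfalso
        have hu'w : u' w = σe w := by
          rcases eq_or_compl hP w (hσmem w hw) (hu'.1 w) with h | h
          · exact h
          · exact absurd (h1.trans h.symm) (hsep w hw)
        have hu'w' : u' w' = σe w' :=
          ultra_mono hu' (hσmem w hw) (hσmem w' hw') hss hu'w
        exact hsep w' hw' (h2.trans hu'w'.symm)
      · rw [h1, h2]; exact Or.inr (compl_subset_compl.2 hss)
  intro w hw w' hw'
  rcases hσcomp w hw w' hw' with h | h
  · exact key w hw w' hw' h
  · exact (key w' hw' w hw h).symm

/-- Flipping an ultrafilter `u` towards `v` on the walls separating them whose `v`-side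
contains a fixed halfspace `V` yields an ultrafilter. -/
lemma flip_ultra (hP : IsWallSystem P) (hS : Nonempty S) {u v : ↥P → Set S}
    (hu : IsUltra P u) (hv : IsUltra P v) (V : Set S) :
    IsUltra P (fun w => if u w ≠ v w ∧ V ⊆ v w then v w else u w) := by
  have hpos : ∀ w : ↥P, (u w ≠ v w ∧ V ⊆ v w) →
      (fun w => if u w ≠ v w ∧ V ⊆ v w then v w else u w) w = v w := by
    intro w h
    show (if u w ≠ v w ∧ V ⊆ v w then v w else u w) = v w
    exact if_pos h
  have hneg : ∀ w : ↥P, ¬(u w ≠ v w ∧ V ⊆ v w) →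
      (fun w => if u w ≠ v w ∧ V ⊆ v w then v w else u w) w = u w := by
    intro w h
    show (if u w ≠ v w ∧ V ⊆ v w then v w else u w) = u w
    exact if_neg h
  constructor
  · intro w
    by_cases h : u w ≠ v w ∧ V ⊆ v w
    · rw [hpos w h]; exact hv.1 w
    · rw [hneg w h]; exact hu.1 w
  · intro w w' A B hA hB hAB hzw
    by_cases h : u w ≠ v w ∧ V ⊆ v w
    · rw [hpos w h] at hzw
      -- v w = A
      have hvw' : v w' = B := ultra_mono hv hA hB hAB hzw
      by_cases h' : u w' ≠ v w' ∧ V ⊆ v w'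
      · rw [hpos w' h']; exact hvw'
      · rw [hneg w' h']
        push_neg at h'
        by_cases huv : u w' = v w'
        · rw [huv]; exact hvw'
        · exact absurd (h.2.trans (hzw.symm ▸ hAB : v w ⊆ B) |>.trans hvw'.symm.subset)
            (h' huv)
    · rw [hneg w h] at hzw
      -- u w = A
      have huw' : u w' = B := ultra_mono hu hA hB hAB hzw
      by_cases h' : u w' ≠ v w' ∧ V ⊆ v w'
      · rw [hpos w' h']
        by_contra hne
        have hvB : v w' = Bᶜ := by
          rcases eq_or_compl hP w' hB (hv.1 w') with hh | hh
          · exact absurd hh hne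
          · exact hh
        have hvw : v w = Aᶜ :=
          ultra_mono hv (compl_mem_wall hP w' hB) (compl_mem_wall hP w hA)
            (compl_subset_compl.2 hAB) hvB
        refine h ⟨?_, ?_⟩
        · rw [hzw, hvw]; exact compl_ne' hS A
        · rw [hvw]
          exact (h'.2.trans hvB.subset).trans (compl_subset_compl.2 hAB)
      · rw [hneg w' h']; exact huw'

lemma exists_min_wall {c : Set ↥P} {σc : ↥P → Set S} (hfin : c.Finite) (hne : c.Nonempty)
    (hcomp : ∀ w ∈ c, ∀ w' ∈ c, σc w ⊆ σc w' ∨ σc w' ⊆ σc w) :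
    ∃ wb ∈ c, ∀ w ∈ c, σc wb ⊆ σc w := by
  obtain ⟨wb, hwb, hmin⟩ := Set.Finite.exists_minimalFor σc c hfin hne
  refine ⟨wb, hwb, fun w hw => ?_⟩
  rcases hcomp wb hwb w hw with h | h
  · exact h
  · exact hmin hw h

lemma exists_max_wall {c : Set ↥P} {σc : ↥P → Set S} (hfin : c.Finite) (hne : c.Nonempty)
    (hcomp : ∀ w ∈ c, ∀ w' ∈ c, σc w ⊆ σc w' ∨ σc w' ⊆ σc w) :
    ∃ wt ∈ c, ∀ w ∈ c, σc w ⊆ σc wt := by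
  obtain ⟨wt, hwt, hmax⟩ := Set.Finite.exists_maximalFor σc c hfin hne
  refine ⟨wt, hwt, fun w hw => ?_⟩
  rcases hcomp wt hwt w hw with h | h
  · exact hmax hw h
  · exact h

end WallDuality
namespace WallDuality

open scoped Classical

variable {S : Type*} {P : Set (Set (Set S))} {C : Set (Set ↥P)}

lemma glue_bound (hP : IsWallSystem P) (hS : Nonempty S) (hC : IsChainSystem P C) {m : ℕ}
    (hglu : IsGluable P C m)
    {p q : ↥P → Set S} (hp : p ∈ dualSpace P C) (r : ℕ)
    {c : Set ↥P} (hcC : c ∈ C)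
    {σc : ↥P → Set S} (hσmem : ∀ w ∈ c, σc w ∈ w.1)
    (hσcomp : ∀ w ∈ c, ∀ w' ∈ c, σc w ⊆ σc w' ∨ σc w' ⊆ σc w)
    {wb : ↥P} (hwb : wb ∈ c) (hwbmin : ∀ w ∈ c, σc wb ⊆ σc w)
    (hstuck : ∀ v ∈ ballX P C p (r : ℕ∞), ∀ w ∈ c, v w = σc w)
    {v₁ : ↥P → Set S} (hv₁B : v₁ ∈ ballX P C q (r : ℕ∞)) (hv₁ : ∀ w ∈ c, v₁ w = (σc w)ᶜ) :
    c.encard ≤ wallDist P C q p + (m : ℕ∞) := by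
  have hD := hC.1
  have hv₁u : IsUltra P v₁ := hv₁B.1.1
  have hpu : IsUltra P p := hp.1
  set z : ↥P → Set S := fun w => if p w ≠ v₁ w ∧ v₁ wb ⊆ v₁ w then v₁ w else p w with hzdef
  have hzu : IsUltra P z := by rw [hzdef]; exact flip_ultra hP hS hpu hv₁u (v₁ wb)
  have hpB : p ∈ ballX P C p (r : ℕ∞) := self_mem_ball hp _
  have hpc : ∀ w ∈ c, p w = σc w := hstuck p hpB
  have hwbcond : p wb ≠ v₁ wb ∧ v₁ wb ⊆ v₁ wb :=
    ⟨by rw [hpc wb hwb, hv₁ wb hwb]; exact compl_ne' hS _, subset_rfl⟩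
  have hzwb : z wb = v₁ wb := by simp only [hzdef]; exact if_pos hwbcond
  have hznot : ¬ wallDist P C p z ≤ (r : ℕ∞) := by
    intro hle
    have hzB := mem_ball_of_dist hD hp hzu hle
    have h1 := hstuck z hzB wb hwb
    rw [hzwb, hv₁ wb hwb] at h1
    exact compl_ne' hS _ h1.symm
  obtain ⟨e, heC, hefin, hecard, hesep⟩ := exists_big_chain hD hznot
  have heT : ∀ w ∈ e, p w ≠ v₁ w ∧ v₁ wb ⊆ v₁ w := by
    intro w hw
    by_contra hcon
    refine hesep w hw ?_
    have : z w = p w := by simp only [hzdef]; exact if_neg hcon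
    exact this.symm
  have hec : e ∩ c ⊆ {wb} := by
    rintro w ⟨hwe, hwc⟩
    have h1 : v₁ wb ⊆ v₁ w := (heT w hwe).2
    rw [hv₁ w hwc, hv₁ wb hwb] at h1
    have h3 : σc w = σc wb := le_antisymm (compl_subset_compl.1 h1) (hwbmin w hwc)
    exact Set.mem_singleton_iff.2 (wall_eq_of_mem hP (h3 ▸ hσmem w hwc) (hσmem wb hwb))
  set e' := e \ c with he'def
  have he'C : e' ∈ C := hD.subset_mem e heC e' Set.diff_subset
  have hdisj : Disjoint e' c := disjoint_sdiff_self_left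
  have he'card : (r : ℕ∞) ≤ e'.encard := by
    have h1 := Set.encard_diff_add_encard_inter e c
    have h2 : (e ∩ c).encard ≤ 1 := le_trans (Set.encard_mono hec) (by simp)
    have h3 : (r : ℕ∞) + 1 ≤ e'.encard + 1 := by
      rw [← hecard, ← h1]
      exact add_le_add_right h2 _
    exact (ENat.add_le_add_iff_right ENat.one_ne_top).1 h3
  set σs : ↥P → Set S := fun w => if w ∈ c then σc w else p w with hσsdef
  have hσs_c : ∀ w ∈ c, σs w = σc w := by
    intro w hw; simp only [hσsdef]; exact if_pos hw
  have hσs_e : ∀ w ∈ e', σs w = p w := by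
    intro w hw; simp only [hσsdef]; exact if_neg hw.2
  have hcross : ∀ w ∈ e', ∀ w' ∈ c, p w ⊆ σc w' := by
    intro w hw w' hw'
    have h1 : p w = (v₁ w)ᶜ := by
      rcases eq_or_compl hP w (hv₁u.1 w) (hpu.1 w) with h | h
      · exact absurd h (heT w hw.1).1
      · exact h
    rw [h1]
    have h2 : (v₁ w)ᶜ ⊆ (v₁ wb)ᶜ := compl_subset_compl.2 (heT w hw.1).2
    rw [hv₁ wb hwb, compl_compl] at h2
    exact h2.trans (hwbmin w' hw')
  have hchain : IsChainOrder P σs (e' ∪ c) := by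
    constructor
    · rintro w (hw | hw)
      · rw [hσs_e w hw]; exact hpu.1 w
      · rw [hσs_c w hw]; exact hσmem w hw
    · have halign := aligned hP hS hC he'C hpu hv₁u (fun w hw => (heT w hw.1).1)
      rintro w (hw | hw) w' (hw' | hw')
      · rw [hσs_e w hw, hσs_e w' hw']; exact halign w hw w' hw'
      · rw [hσs_e w hw, hσs_c w' hw']; exact Or.inl (hcross w hw w' hw')
      · rw [hσs_e w' hw', hσs_c w hw]; exact Or.inr (hcross w' hw' w hw)
      · rw [hσs_c w hw, hσs_c w' hw']; exact hσcomp w hw w' hw'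
  have hmono : ∀ w₁ ∈ e', ∀ w₂ ∈ c, σs w₁ ⊆ σs w₂ := by
    intro w₁ h1 w₂ h2; rw [hσs_e w₁ h1, hσs_c w₂ h2]; exact hcross w₁ h1 w₂ h2
  obtain ⟨b, hbsub, hbcard, -, -, -, hgC⟩ := hglu e' he'C c hcC σs hchain hdisj hmono
  set g := (e' ∪ c) \ b with hgdef
  have hcover : ∀ w ∈ g, q w ≠ p w ∨ q w ≠ v₁ w := by
    rintro w ⟨hw1, -⟩
    have hpv : p w ≠ v₁ w := by
      rcases hw1 with hwe | hwc
      · exact (heT w hwe.1).1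
      · rw [hpc w hwc, hv₁ w hwc]; exact compl_ne' hS _
    by_contra hcon
    push_neg at hcon
    exact hpv (hcon.1.symm.trans hcon.2)
  have hsplit : g.encard ≤ wallDist P C q p + (r : ℕ∞) := by
    have hgsub : g ⊆ (g ∩ {w | q w ≠ p w}) ∪ (g ∩ {w | q w ≠ v₁ w}) := by
      intro w hw
      rcases hcover w hw with h | h
      · exact Or.inl ⟨hw, h⟩
      · exact Or.inr ⟨hw, h⟩
    calc g.encard ≤ ((g ∩ {w | q w ≠ p w}) ∪ (g ∩ {w | q w ≠ v₁ w})).encard :=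
          Set.encard_mono hgsub
      _ ≤ (g ∩ {w | q w ≠ p w}).encard + (g ∩ {w | q w ≠ v₁ w}).encard :=
          Set.encard_union_le _ _
      _ ≤ wallDist P C q p + (r : ℕ∞) := by
          gcongr
          · exact le_wallDist (hD.subset_mem _ hgC _ Set.inter_subset_left) fun w hw => hw.2
          · exact le_trans
              (le_wallDist (hD.subset_mem _ hgC _ Set.inter_subset_left) fun w hw => hw.2)
              hv₁B.2
  have hcount : e'.encard + c.encard ≤ (wallDist P C q p + (r : ℕ∞)) + (m : ℕ∞) := by
    have h1 : (e' ∪ c).encard = e'.encard + c.encard := Set.encard_union_eq hdisj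
    have h2 := Set.encard_diff_add_encard_inter (e' ∪ c) b
    have h3 : ((e' ∪ c) ∩ b).encard ≤ (m : ℕ∞) :=
      le_trans (Set.encard_mono Set.inter_subset_right) hbcard
    calc e'.encard + c.encard = (e' ∪ c).encard := h1.symm
      _ = g.encard + ((e' ∪ c) ∩ b).encard := h2.symm
      _ ≤ (wallDist P C q p + (r : ℕ∞)) + (m : ℕ∞) := add_le_add hsplit h3
  have hfinal : (r : ℕ∞) + c.encard ≤ (r : ℕ∞) + (wallDist P C q p + (m : ℕ∞)) := by
    calc (r : ℕ∞) + c.encard ≤ e'.encard + c.encard := add_le_add_left he'card _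
      _ ≤ (wallDist P C q p + (r : ℕ∞)) + (m : ℕ∞) := hcount
      _ = (r : ℕ∞) + (wallDist P C q p + (m : ℕ∞)) := by ring
  exact (WithTop.add_le_add_iff_left (by simp : (r : ℕ∞) ≠ ⊤)).1 hfinal

end WallDuality
namespace WallDuality

open scoped Classical

variable {S : Type*} {P : Set (Set (Set S))} {C : Set (Set ↥P)}

lemma core (hP : IsWallSystem P) (hS : Nonempty S) (hC : IsChainSystem P C) {m : ℕ}
    (hglu : IsGluable P C m)
    (x₁ y₁ x₂ y₂ : ↥P → Set S) (hx₁ : x₁ ∈ dualSpace P C) (hy₁ : y₁ ∈ dualSpace P C)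
    (hx₂ : x₂ ∈ dualSpace P C) (hy₂ : y₂ ∈ dualSpace P C) (r : ℕ)
    {c : Set ↥P} (hcC : c ∈ C) (hfin : c.Finite)
    (hsep : ∀ w ∈ c, nwp P C x₁ y₁ r w ≠ nwp P C x₂ y₂ r w)
    {σc : ↥P → Set S} (hσmem : ∀ w ∈ c, σc w ∈ w.1)
    (hσcomp : ∀ w ∈ c, ∀ w' ∈ c, σc w ⊆ σc w' ∨ σc w' ⊆ σc w)
    {wb : ↥P} (hwb : wb ∈ c) (hwbmin : ∀ w ∈ c, σc wb ⊆ σc w)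
    (h2bot : nwp P C x₂ y₂ r wb = σc wb) :
    c.encard ≤ max (wallDist P C x₁ x₂) (wallDist P C y₁ y₂) + (m : ℕ∞) := by
  have hnwp : ∀ x y : ↥P → Set S, nwp P C x y r = gateUF P (ballX P C x (r : ℕ∞)) y :=
    fun _ _ => rfl
  rw [hnwp] at h2bot
  simp only [hnwp] at hsep
  have hup : ∀ u : ↥P → Set S, IsUltra P u → u wb = σc wb → ∀ w ∈ c, u w = σc w :=
    fun u hu h w hw => ultra_mono hu (hσmem wb hwb) (hσmem w hw) (hwbmin w hw) h
  -- Step A: structure of the gate of y₂ on c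
  have hStepA : (∃ v₂ ∈ ballX P C x₂ (r : ℕ∞), ∀ w ∈ c, v₂ w = σc w) ∧
      (∀ w ∈ c, gateUF P (ballX P C x₂ (r : ℕ∞)) y₂ w = σc w) ∧
      ((∀ w ∈ c, y₂ w = σc w) ∨ (∀ v ∈ ballX P C x₂ (r : ℕ∞), ∀ w ∈ c, v w = σc w)) := by
    rcases gate_spec (ballX P C x₂ (r : ℕ∞)) y₂ wb with ⟨⟨v, hvB, hvwb⟩, heq⟩ | ⟨hall, heq⟩
    · have hy₂wb : y₂ wb = σc wb := by rw [← heq]; exact h2bot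
      have hy₂c : ∀ w ∈ c, y₂ w = σc w := hup y₂ hy₂.1 hy₂wb
      have hvc : ∀ w ∈ c, v w = σc w := hup v (ball_ultra hvB) (hvwb.trans hy₂wb)
      refine ⟨⟨v, hvB, hvc⟩, ?_, Or.inl hy₂c⟩
      intro w hw
      rcases gate_spec (ballX P C x₂ (r : ℕ∞)) y₂ w with ⟨-, he⟩ | ⟨hnone, he⟩
      · exact he.trans (hy₂c w hw)
      · exact absurd ((hvc w hw).trans (hy₂c w hw).symm) (hnone v hvB)
    · have hy₂wb : y₂ wb = (σc wb)ᶜ := by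
        have h1 : (y₂ wb)ᶜ = σc wb := by rw [← heq]; exact h2bot
        rw [← h1, compl_compl]
      have hstuck : ∀ v ∈ ballX P C x₂ (r : ℕ∞), ∀ w ∈ c, v w = σc w := by
        intro v hv w hw
        refine hup v (ball_ultra hv) ?_ w hw
        rcases eq_or_compl hP wb (hy₂.1.1 wb) ((ball_ultra hv).1 wb) with h | h
        · exact absurd h (hall v hv)
        · rw [h, hy₂wb, compl_compl]
      refine ⟨⟨x₂, self_mem_ball hx₂ _, hstuck x₂ (self_mem_ball hx₂ _)⟩, ?_, Or.inr hstuck⟩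
      intro w hw
      by_cases hy : y₂ w = σc w
      · rcases gate_spec (ballX P C x₂ (r : ℕ∞)) y₂ w with ⟨-, he⟩ | ⟨hnone, he⟩
        · exact he.trans hy
        · exact absurd ((hstuck x₂ (self_mem_ball hx₂ _) w hw).trans hy.symm)
            (hnone x₂ (self_mem_ball hx₂ _))
      · have hy' : y₂ w = (σc w)ᶜ := by
          rcases eq_or_compl hP w (hσmem w hw) (hy₂.1.1 w) with h | h
          · exact absurd h hy
          · exact h
        rcases gate_spec (ballX P C x₂ (r : ℕ∞)) y₂ w with ⟨⟨v', hv', hvw'⟩, he⟩ | ⟨-, he⟩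
        · exfalso
          have h2 := (hstuck v' hv' w hw).symm.trans hvw'
          rw [hy'] at h2
          exact compl_ne' hS _ h2
        · exact he.trans (by rw [hy', compl_compl])
  obtain ⟨⟨v₂, hv₂B, hv₂c⟩, hσ₂, hy₂or⟩ := hStepA
  -- the gate of y₁ takes the complementary halfspaces on c
  have hσ₁ : ∀ w ∈ c, gateUF P (ballX P C x₁ (r : ℕ∞)) y₁ w = (σc w)ᶜ := by
    intro w hw
    rcases eq_or_compl hP w (hσmem w hw) (gate_mem_wall hP hy₁.1 w) with h | h
    · exact absurd (h.trans (hσ₂ w hw).symm) (hsep w hw)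
    · exact h
  obtain ⟨wt, hwt, hwtmax⟩ := exists_max_wall hfin ⟨wb, hwb⟩ hσcomp
  have hdown : ∀ u : ↥P → Set S, IsUltra P u → u wt = (σc wt)ᶜ → ∀ w ∈ c, u w = (σc w)ᶜ := by
    intro u hu h w hw
    rcases eq_or_compl hP w (hσmem w hw) (hu.1 w) with hh | hh
    · have h2 : u wt = σc wt := ultra_mono hu (hσmem w hw) (hσmem wt hwt) (hwtmax w hw) hh
      exact absurd (h2.symm.trans h) (compl_ne' hS _)
    · exact hh
  -- Step B: structure of the gate of y₁ on c
  have hStepB : (∃ v₁ ∈ ballX P C x₁ (r : ℕ∞), ∀ w ∈ c, v₁ w = (σc w)ᶜ) ∧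
      ((∀ w ∈ c, y₁ w = (σc w)ᶜ) ∨ (∀ v ∈ ballX P C x₁ (r : ℕ∞), ∀ w ∈ c, v w = (σc w)ᶜ)) := by
    have h1wt : gateUF P (ballX P C x₁ (r : ℕ∞)) y₁ wt = (σc wt)ᶜ := hσ₁ wt hwt
    rcases gate_spec (ballX P C x₁ (r : ℕ∞)) y₁ wt with ⟨⟨v, hvB, hvwt⟩, heq⟩ | ⟨hall, heq⟩
    · have hy₁wt : y₁ wt = (σc wt)ᶜ := by rw [← heq]; exact h1wt
      exact ⟨⟨v, hvB, hdown v (ball_ultra hvB) (hvwt.trans hy₁wt)⟩,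
        Or.inl (hdown y₁ hy₁.1 hy₁wt)⟩
    · have hy₁wt : y₁ wt = σc wt := compl_injective (heq.symm.trans h1wt)
      have hstuck : ∀ v ∈ ballX P C x₁ (r : ℕ∞), ∀ w ∈ c, v w = (σc w)ᶜ := by
        intro v hv w hw
        refine hdown v (ball_ultra hv) ?_ w hw
        rcases eq_or_compl hP wt (hy₁.1.1 wt) ((ball_ultra hv).1 wt) with h | h
        · exact absurd h (hall v hv)
        · rw [h, hy₁wt]
      exact ⟨⟨x₁, self_mem_ball hx₁ _, hstuck x₁ (self_mem_ball hx₁ _)⟩, Or.inr hstuck⟩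
  obtain ⟨⟨v₁, hv₁B, hv₁c⟩, hy₁or⟩ := hStepB
  rcases hy₂or with hy₂c | hstuck₂
  · rcases hy₁or with hy₁c | hstuck₁
    · have h1 : c.encard ≤ wallDist P C y₁ y₂ :=
        le_wallDist hcC fun w hw => by
          rw [hy₁c w hw, hy₂c w hw]; exact (compl_ne' hS _).symm
      exact h1.trans (le_trans (le_max_right _ _) le_self_add)
    · have hres := glue_bound hP hS hC hglu hx₁ r hcC
        (σc := fun w => (σc w)ᶜ) (fun w hw => compl_mem_wall hP w (hσmem w hw))
        (fun w hw w' hw' =>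
          (hσcomp w hw w' hw').symm.imp compl_subset_compl.2 compl_subset_compl.2)
        hwt (fun w hw => compl_subset_compl.2 (hwtmax w hw))
        hstuck₁ hv₂B (fun w hw => by rw [compl_compl]; exact hv₂c w hw)
      calc c.encard ≤ wallDist P C x₂ x₁ + (m : ℕ∞) := hres
        _ = wallDist P C x₁ x₂ + (m : ℕ∞) := by rw [wallDist_symm]
        _ ≤ max (wallDist P C x₁ x₂) (wallDist P C y₁ y₂) + (m : ℕ∞) :=
            add_le_add_left (le_max_left _ _) _
  · have hres := glue_bound hP hS hC hglu hx₂ r hcC hσmem hσcomp hwb hwbmin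
      hstuck₂ hv₁B hv₁c
    exact hres.trans (add_le_add_left (le_max_left _ _) _)

end WallDuality

namespace WallDuality

/-- **Normal wall paths fellow-travel** (Proposition 4.9): for an `m`-gluable
system of chains, normal wall paths satisfy
`dist_C (σ_{x₁y₁} r, σ_{x₂y₂} r) ≤ max (dist_C x₁ x₂) (dist_C y₁ y₂) + 3m`. -/
theorem nwp_fellow_travel
    {S : Type*} (P : Set (Set (Set S))) (C : Set (Set ↥P))
    (hP : IsWallSystem P) (hC : IsChainSystem P C)
    (m : ℕ) (hglu : IsGluable P C m)
    (x₁ y₁ x₂ y₂ : ↥P → Set S)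
    (hx₁ : x₁ ∈ dualSpace P C) (hy₁ : y₁ ∈ dualSpace P C)
    (hx₂ : x₂ ∈ dualSpace P C) (hy₂ : y₂ ∈ dualSpace P C)
    (r : ℕ) :
    wallDist P C (nwp P C x₁ y₁ r) (nwp P C x₂ y₂ r)
      ≤ max (wallDist P C x₁ x₂) (wallDist P C y₁ y₂) + ((3 * m : ℕ) : ℕ∞) := by
  classical
  rcases isEmpty_or_nonempty S with hS | hS
  · refine wallDist_le fun c hc hsep => ?_
    have hce : c = ∅ := Set.eq_empty_iff_forall_notMem.2 fun w hw =>
      hsep w hw (Set.ext fun s => isEmptyElim s)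
    simp [hce]
  have hD := hC.1
  refine wallDist_le fun c hcC hsep => ?_
  set M := max (wallDist P C x₁ x₂) (wallDist P C y₁ y₂) with hM
  have hkey : ∀ e ∈ C, e.Finite → (∀ w ∈ e, nwp P C x₁ y₁ r w ≠ nwp P C x₂ y₂ r w) →
      e.encard ≤ M + (m : ℕ∞) := by
    intro e heC hefin hesep
    rcases Set.eq_empty_or_nonempty e with rfl | hene
    · simp
    obtain ⟨σc, hσmem, hσcomp⟩ := hC.2 e heC
    obtain ⟨wb, hwb, hwbmin⟩ := exists_min_wall hefin hene hσcomp
    have h1 : nwp P C x₁ y₁ r wb ∈ wb.1 := gate_mem_wall hP hy₁.1 wb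
    have h2 : nwp P C x₂ y₂ r wb ∈ wb.1 := gate_mem_wall hP hy₂.1 wb
    rcases eq_or_compl hP wb (hσmem wb hwb) h2 with h | h
    · exact core hP hS hC hglu x₁ y₁ x₂ y₂ hx₁ hy₁ hx₂ hy₂ r heC hefin hesep
        hσmem hσcomp hwb hwbmin h
    · have h1' : nwp P C x₁ y₁ r wb = σc wb := by
        rcases eq_or_compl hP wb (hσmem wb hwb) h1 with hh | hh
        · exact hh
        · exact absurd (hh.trans h.symm) (hesep wb hwb)
      have hcore := core hP hS hC hglu x₂ y₂ x₁ y₁ hx₂ hy₂ hx₁ hy₁ r heC hefin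
        (fun w hw => (hesep w hw).symm) hσmem hσcomp hwb hwbmin h1'
      calc e.encard ≤ max (wallDist P C x₂ x₁) (wallDist P C y₂ y₁) + (m : ℕ∞) := hcore
        _ = M + (m : ℕ∞) := by
            rw [hM, wallDist_symm (x := x₂) (y := x₁), wallDist_symm (x := y₂) (y := y₁)]
  have hcle : c.encard ≤ M + (m : ℕ∞) := by
    by_cases hMtop : M + (m : ℕ∞) = ⊤
    · rw [hMtop]; exact le_top
    by_contra hlt
    rw [not_le] at hlt
    have hle : M + (m : ℕ∞) + 1 ≤ c.encard := Order.add_one_le_of_lt hlt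
    obtain ⟨e, hec, hecard⟩ := Set.exists_subset_encard_eq hle
    obtain ⟨k, hk⟩ := WithTop.ne_top_iff_exists.1 hMtop
    have hefin : e.Finite := Set.finite_of_encard_eq_coe
      (show e.encard = ((k + 1 : ℕ) : ℕ∞) by rw [hecard, ← hk]; norm_cast)
    have hbound := hkey e (hD.subset_mem c hcC e hec) hefin (fun w hw => hsep w (hec hw))
    rw [hecard, ← hk] at hbound
    exact lt_irrefl ((k : ℕ∞)) ((ENat.add_one_le_iff (by simp)).1 hbound)
  refine hcle.trans (add_le_add_right ?_ M)
  exact_mod_cast Nat.le_mul_of_pos_left m (by norm_num)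

end WallDuality
end
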